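/- Let V: ℝ^m → ℝ be measurable and u_1, ..., u_N ∈ ℝ^m with V(u_i) finite. Define for τ ≥ τ_k the effective sample size ESS_k(τ) = (1/N)·(∑_{i=1}^N exp[(τ−τ_k)V(u_i)])² / ∑_{i=1}^N exp[2(τ−τ_k)V(u_i)]. Then ESS_k(τ_k) = 1, ESS_k(τ) ∈ (0,1] for all τ, and if the values V(u_i) are not all equal then τ ↦ ESS_k(τ) is strictly decreasing on (τ_k, ∞). -/

import Mathlib

/-!
Write `w_i = exp (t v_i)` with `t = τ - τₖ`. The bound `ESS ≤ 1` is Cauchy–Schwarz. Up to a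
positive factor, the derivative of `(∑ w)² / ∑ w²` in `t` is `(∑ v w)(∑ w²) - (∑ w)(∑ v w²)`,
minus a covariance of `v` and `w` under the weights `w`. For `t > 0`, `w` is a strictly increasing
function of `v`, so this covariance is positive unless `v` is constant (weighted Chebyshev sum
inequality): twice it equals `∑ i j, w_i w_j (v_i - v_j) (w_i - w_j)`.
-/

open Real Finset

section Chebyshev

variable {ι : Type*} [Fintype ι]

theorem two_mul_sum_mul_sum_sub_sum_mul_sum {R : Type*} [CommRing R] (p f g : ι → R) :
    2 * ((∑ i, p i) * (∑ i, p i * f i * g i) - (∑ i, p i * f i) * (∑ i, p i * g i)) =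
      ∑ i, ∑ j, p i * p j * ((f i - f j) * (g i - g j)) := by
  set X : ι → ι → R := fun i j => p i * (p j * f j * g j) - p i * f i * (p j * g j)
  have hX : (∑ i, p i) * (∑ i, p i * f i * g i) - (∑ i, p i * f i) * (∑ i, p i * g i) =
      ∑ i, ∑ j, X i j := by
    simp only [X, Fintype.sum_mul_sum, ← sum_sub_distrib]
  calc _ = ∑ i, ∑ j, X i j + ∑ i, ∑ j, X j i := by rw [hX, sum_comm (f := fun i j => X j i)]; ring
    _ = _ := by simp only [← sum_add_distrib, X]; congr! 2; ring

theorem StrictMono.sub_mul_sub_pos {φ : ℝ → ℝ} (hφ : StrictMono φ) {x y : ℝ} (hxy : x ≠ y) :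
    0 < (x - y) * (φ x - φ y) := by
  rcases hxy.lt_or_gt with h | h
  · exact mul_pos_of_neg_of_neg (sub_neg.2 h) (sub_neg.2 (hφ h))
  · exact mul_pos (sub_pos.2 h) (sub_pos.2 (hφ h))

theorem StrictMono.sub_mul_sub_nonneg {φ : ℝ → ℝ} (hφ : StrictMono φ) (x y : ℝ) :
    0 ≤ (x - y) * (φ x - φ y) := by
  rcases eq_or_ne x y with rfl | hxy
  · simp
  · exact (hφ.sub_mul_sub_pos hxy).le

theorem sum_mul_sum_lt_sum_mul_sum_of_strictMono {p f : ι → ℝ} {φ : ℝ → ℝ}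
    (hp : ∀ i, 0 < p i) (hφ : StrictMono φ) (hf : ∃ i j, f i ≠ f j) :
    (∑ i, p i * f i) * (∑ i, p i * φ (f i)) < (∑ i, p i) * (∑ i, p i * f i * φ (f i)) := by
  obtain ⟨i₀, j₀, hne⟩ := hf
  have hterm : ∀ i j, 0 ≤ p i * p j * ((f i - f j) * (φ (f i) - φ (f j))) := fun i j =>
    mul_nonneg (mul_pos (hp i) (hp j)).le (hφ.sub_mul_sub_nonneg _ _)
  have hpos : 0 < ∑ i, ∑ j, p i * p j * ((f i - f j) * (φ (f i) - φ (f j))) :=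
    sum_pos' (fun i _ => sum_nonneg fun j _ => hterm i j) ⟨i₀, mem_univ _,
      sum_pos' (fun j _ => hterm i₀ j)
        ⟨j₀, mem_univ _, mul_pos (mul_pos (hp i₀) (hp j₀)) (hφ.sub_mul_sub_pos hne)⟩⟩
  linarith [two_mul_sum_mul_sum_sub_sum_mul_sum p f (fun i => φ (f i))]

end Chebyshev

section EffectiveSampleSize

variable {ι : Type*} [Fintype ι] (v : ι → ℝ)

noncomputable def effectiveSampleSize (t : ℝ) : ℝ :=
  (∑ i, exp (t * v i)) ^ 2 / (Fintype.card ι * ∑ i, exp (t * v i) ^ 2)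

theorem effectiveSampleSize_zero [Nonempty ι] : effectiveSampleSize v 0 = 1 := by
  have : (Fintype.card ι : ℝ) ≠ 0 := Nat.cast_ne_zero.2 Fintype.card_ne_zero
  simp only [effectiveSampleSize, zero_mul, exp_zero, sum_const, card_univ, nsmul_eq_mul, mul_one,
    one_pow]
  field_simp

theorem effectiveSampleSize_pos [Nonempty ι] (t : ℝ) : 0 < effectiveSampleSize v t := by
  unfold effectiveSampleSize; positivity

theorem effectiveSampleSize_le_one (t : ℝ) : effectiveSampleSize v t ≤ 1 :=
  div_le_one_of_le₀ (sq_sum_le_card_mul_sum_sq ..) (by positivity)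

theorem hasDerivAt_sum_exp_mul (t : ℝ) :
    HasDerivAt (fun t => ∑ i, exp (t * v i)) (∑ i, v i * exp (t * v i)) t :=
  HasDerivAt.fun_sum fun i _ =>
    ((hasDerivAt_id' t).mul_const (v i)).exp.congr_deriv (by ring)

theorem hasDerivAt_sum_exp_mul_sq (t : ℝ) :
    HasDerivAt (fun t => ∑ i, exp (t * v i) ^ 2) (2 * ∑ i, v i * exp (t * v i) ^ 2) t := by
  rw [mul_sum]
  refine HasDerivAt.fun_sum fun i _ => ?_
  exact (((hasDerivAt_id' t).mul_const (v i)).exp.fun_pow 2).congr_deriv (by push_cast; ring)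

theorem hasDerivAt_effectiveSampleSize [Nonempty ι] (t : ℝ) :
    HasDerivAt (effectiveSampleSize v)
      (2 * Fintype.card ι * (∑ i, exp (t * v i)) *
          ((∑ i, v i * exp (t * v i)) * (∑ i, exp (t * v i) ^ 2) -
            (∑ i, exp (t * v i)) * (∑ i, v i * exp (t * v i) ^ 2)) /
        (Fintype.card ι * ∑ i, exp (t * v i) ^ 2) ^ 2) t := by
  have hden : (Fintype.card ι : ℝ) * ∑ i, exp (t * v i) ^ 2 ≠ 0 := by positivity
  exact (((hasDerivAt_sum_exp_mul v t).fun_pow 2).div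
    ((hasDerivAt_sum_exp_mul_sq v t).const_mul _) hden).congr_deriv (by ring)

theorem effectiveSampleSize_strictAntiOn [Nonempty ι] (hv : ∃ i j, v i ≠ v j) :
    StrictAntiOn (effectiveSampleSize v) (Set.Ici 0) := by
  refine strictAntiOn_of_hasDerivWithinAt_neg (convex_Ici 0)
    (fun t _ => (hasDerivAt_effectiveSampleSize v t).continuousAt.continuousWithinAt)
    (fun t _ => (hasDerivAt_effectiveSampleSize v t).hasDerivWithinAt) fun t ht => ?_
  rw [interior_Ici, Set.mem_Ioi] at ht
  have hcheb := sum_mul_sum_lt_sum_mul_sum_of_strictMono (p := fun i => exp (t * v i))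
    (fun i => exp_pos _) (fun x y hxy => exp_lt_exp.2 (mul_lt_mul_of_pos_left hxy ht)) hv
  simp only [← sq, mul_comm (exp _) (v _), mul_assoc] at hcheb
  refine div_neg_of_neg_of_pos (mul_neg_of_pos_of_neg (by positivity) ?_) (by positivity)
  linarith

end EffectiveSampleSize

theorem stmt15_general (m N : ℕ) (hN : 0 < N)
    (V : (Fin m → ℝ) → ℝ)
    (u : Fin N → (Fin m → ℝ)) (τk : ℝ)
    (ESS : ℝ → ℝ)
    (hESS : ∀ τ, ESS τ =
      (∑ i, Real.exp ((τ - τk) * V (u i))) ^ 2 /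
        (N * ∑ i, Real.exp ((τ - τk) * V (u i)) ^ 2)) :
    ESS τk = 1 ∧
    (∀ τ, 0 < ESS τ ∧ ESS τ ≤ 1) ∧
    ((¬ ∀ i j, V (u i) = V (u j)) → StrictAntiOn ESS (Set.Ioi τk)) := by
  have : Nonempty (Fin N) := Fin.pos_iff_nonempty.1 hN
  set v : Fin N → ℝ := fun i => V (u i)
  have hESS' : ∀ τ, ESS τ = effectiveSampleSize v (τ - τk) := fun τ => by
    rw [hESS, effectiveSampleSize, Fintype.card_fin]
  refine ⟨by rw [hESS', sub_self, effectiveSampleSize_zero], fun τ => ?_, fun hV => ?_⟩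
  · rw [hESS']
    exact ⟨effectiveSampleSize_pos v _, effectiveSampleSize_le_one v _⟩
  · push Not at hV
    intro a ha b hb hab
    rw [hESS', hESS']
    exact effectiveSampleSize_strictAntiOn v hV (Set.mem_Ici.2 (sub_nonneg.2 ha.le))
      (Set.mem_Ici.2 (sub_nonneg.2 hb.le)) (sub_lt_sub_right hab τk)

/-- basic properties of the effective sample size functional used in
adaptive tempering. -/
theorem stmt15 (m N : ℕ) (hN : 0 < N)
    (V : (Fin m → ℝ) → ℝ) (hVmeas : Measurable V)
    (u : Fin N → (Fin m → ℝ)) (τk : ℝ)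
    (ESS : ℝ → ℝ)
    (hESS : ∀ τ, ESS τ =
      (∑ i, Real.exp ((τ - τk) * V (u i))) ^ 2 /
        (N * ∑ i, Real.exp ((τ - τk) * V (u i)) ^ 2)) :
    ESS τk = 1 ∧
    (∀ τ, 0 < ESS τ ∧ ESS τ ≤ 1) ∧
    ((¬ ∀ i j, V (u i) = V (u j)) → StrictAntiOn ESS (Set.Ioi τk)) :=
  stmt15_general m N hN V u τk ESS hESS
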